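/- Let V_L, V_R : ℝ → B(H) be strongly continuous, locally norm-bounded, with V_L(t), V_R(t) selfadjoint for every t, and let C : ℝ → B(H) satisfy, for every x ∈ H, that t ↦ C(t)x is differentiable with i d/dt(C(t)x) = V_L(t)C(t)x + C(t)V_R(t)x. If C(0) is a Hilbert–Schmidt operator, then C(t) is Hilbert–Schmidt for every t ∈ ℝ and its Hilbert–Schmidt norm is conserved: ‖C(t)‖_{HS} = ‖C(0)‖_{HS} for all t (equivalently, tr C(t)C(t)* is constant in t). -/

import Mathlib

/-!
Solve `y' = i V_R(s) y` globally by the Dyson series; by selfadjointness these solutions conserve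
norms, so transporting values from time `t` to time `0` is a unitary `U`. For such a solution `y`,
`φ(s) = C(s) y(s)` solves `φ' = -i V_L(s) φ`, hence `‖C(t) y(t)‖ = ‖C(0) y(0)‖`; with `y(t) = e_k`
this gives `‖C(t) e_k‖ = ‖C(0) (U e_k)‖`. Finally the sum `∑ₖ ‖S b_k‖²` does not depend on the
Hilbert basis `b`: by Parseval both sides equal `∑ⱼ ‖S† d_j‖²` (computed in `ℝ≥0∞`, where the
double sum can be swapped freely).
-/

open Filter Topology MeasureTheory
open scoped Interval InnerProductSpace InnerProduct ENNReal

section StronglyContinuous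

variable {𝕜 X E F : Type*} [NontriviallyNormedField 𝕜] [TopologicalSpace X]
  [NormedAddCommGroup E] [NormedSpace 𝕜 E] [CompleteSpace E]
  [NormedAddCommGroup F] [NormedSpace 𝕜 F] {W : X → E →L[𝕜] F}

theorem IsCompact.exists_forall_opNorm_le_of_continuous_apply {K : Set X} (hK : IsCompact K)
    (hW : ∀ x, Continuous fun s => W s x) : ∃ M, ∀ s ∈ K, ‖W s‖ ≤ M := by
  obtain ⟨M, hM⟩ := banach_steinhaus (g := fun s : K => W s) fun x =>
    (hK.exists_bound_of_continuousOn (hW x).continuousOn).imp fun _ h s => h s s.2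
  exact ⟨M, fun s hs => hM ⟨s, hs⟩⟩

theorem eventually_opNorm_le_of_continuous_apply [LocallyCompactSpace X]
    (hW : ∀ x, Continuous fun s => W s x) (v : X) : ∃ M, ∀ᶠ s in 𝓝 v, ‖W s‖ ≤ M := by
  obtain ⟨K, hK, hKv⟩ := exists_compact_mem_nhds v
  obtain ⟨M, hM⟩ := hK.exists_forall_opNorm_le_of_continuous_apply hW
  exact ⟨M, eventually_of_mem hKv hM⟩

theorem continuous_clm_apply_of_continuous_apply [LocallyCompactSpace X]
    (hW : ∀ x, Continuous fun s => W s x) {b : X → E} (hb : Continuous b) :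
    Continuous fun s => W s (b s) := by
  refine continuous_iff_continuousAt.2 fun v => ?_
  obtain ⟨M, hM⟩ := eventually_opNorm_le_of_continuous_apply hW v
  have hsmall : Tendsto (fun s => W s (b s - b v)) (𝓝 v) (𝓝 0) := by
    refine squeeze_zero_norm' (hM.mono fun s hs => (W s).le_of_opNorm_le hs _) ?_
    simpa using ((hb.tendsto v).sub_const (b v)).norm.const_mul M
  have hlim := hsmall.add ((hW (b v)).tendsto v)
  simp only [map_sub, sub_add_cancel, zero_add] at hlim
  exact hlim

variable [NormedAlgebra ℝ 𝕜] [NormedSpace ℝ E] [IsScalarTower ℝ 𝕜 E] [NormedSpace ℝ F]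
  [IsScalarTower ℝ 𝕜 F]

theorem HasDerivAt.clm_apply_of_continuous_apply {C : ℝ → E →L[𝕜] F} {y : ℝ → E} {D : F} {v : E}
    {s : ℝ} (hC : ∀ x, Continuous fun u => C u x) (hCd : HasDerivAt (fun u => C u (y s)) D s)
    (hy : HasDerivAt y v s) : HasDerivAt (fun u => C u (y u)) (D + C s v) s := by
  obtain ⟨K, hK⟩ := eventually_opNorm_le_of_continuous_apply hC s
  have hrest : HasDerivAt (fun u => C u (y u - y s)) (C s v) s := by
    rw [hasDerivAt_iff_isLittleO]
    have hsplit : (fun u => C u (y u - y s) - C s (y s - y s) - (u - s) • C s v)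
        = (fun u => C u (y u - y s - (u - s) • v)) + fun u => (u - s) • (C u v - C s v) := by
      funext u
      simp only [Pi.add_apply, map_sub, sub_self, map_zero, smul_sub,
        ContinuousLinearMap.map_smul_of_tower]
      abel
    rw [hsplit]
    refine Asymptotics.IsLittleO.add ?_ ?_
    · refine Asymptotics.IsBigO.trans_isLittleO ?_ (hasDerivAt_iff_isLittleO.mp hy)
      exact Asymptotics.IsBigO.of_bound K (hK.mono fun u hu => (C u).le_of_opNorm_le hu _)
    · have hCv : Tendsto (fun u => C u v - C s v) (𝓝 s) (𝓝 0) := by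
        simpa using ((hC v).tendsto s).sub_const (C s v)
      simpa only [smul_eq_mul, mul_one] using
        (Asymptotics.isBigO_refl (fun u => u - s) (𝓝 s)).smul_isLittleO
          ((Asymptotics.isLittleO_one_iff ℝ).2 hCv)
  simpa only [map_sub, add_sub_cancel] using hCd.fun_add hrest

end StronglyContinuous

section DysonSeries

variable {𝕜 E : Type*} [NontriviallyNormedField 𝕜] [NormedAddCommGroup E] [NormedSpace 𝕜 E]
  [NormedSpace ℝ E] (W : ℝ → E →L[𝕜] E) (t₀ : ℝ) (x : E)

noncomputable def dysonTerm : ℕ → ℝ → E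
  | 0 => fun _ => x
  | n + 1 => fun s => ∫ u in t₀..s, W u (dysonTerm n u)

variable {W t₀ x}

theorem norm_dysonTerm_le {M R : ℝ} (hM : 0 ≤ M) (hWM : ∀ u, |u - t₀| ≤ R → ‖W u‖ ≤ M)
    (n : ℕ) {s : ℝ} (hs : |s - t₀| ≤ R) :
    ‖dysonTerm W t₀ x n s‖ ≤ ‖x‖ * (M * |s - t₀|) ^ n / n.factorial := by
  induction n generalizing s with
  | zero => simp [dysonTerm]
  | succ n ih =>
    set c := M ^ (n + 1) * ‖x‖ / n.factorial
    have hbound : ∀ u ∈ Ι t₀ s, ‖W u (dysonTerm W t₀ x n u)‖ ≤ c * |u - t₀| ^ n := by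
      intro u hu
      have hut : |u - t₀| ≤ |s - t₀| := Set.abs_sub_left_of_mem_uIcc (Set.uIoc_subset_uIcc hu)
      calc ‖W u (dysonTerm W t₀ x n u)‖ ≤ M * ‖dysonTerm W t₀ x n u‖ :=
            (W u).le_of_opNorm_le (hWM u (hut.trans hs)) _
        _ ≤ M * (‖x‖ * (M * |u - t₀|) ^ n / n.factorial) := by gcongr; exact ih (hut.trans hs)
        _ = c * |u - t₀| ^ n := by ring
    calc ‖dysonTerm W t₀ x (n + 1) s‖ ≤ ∫ u in Ι t₀ s, ‖W u (dysonTerm W t₀ x n u)‖ :=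
          intervalIntegral.norm_integral_le_integral_norm_uIoc
      _ ≤ ∫ u in Ι t₀ s, c * |u - t₀| ^ n :=
          integral_mono_of_nonneg (.of_forall fun _ => norm_nonneg _)
            (by fun_prop : Continuous fun u => c * |u - t₀| ^ n).integrableOn_uIoc
            ((ae_restrict_iff' measurableSet_uIoc).2 (.of_forall hbound))
      _ = ‖x‖ * (M * |s - t₀|) ^ (n + 1) / (n + 1).factorial := by
          rw [integral_const_mul, integral_pow_abs_sub_uIoc, Nat.factorial_succ]
          simp only [c]
          push_cast
          field_simp
          ring

variable [CompleteSpace E] (hW : ∀ x, Continuous fun s => W s x)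
include hW

theorem continuous_dysonTerm (n : ℕ) : Continuous (dysonTerm W t₀ x n) := by
  induction n with
  | zero => exact continuous_const
  | succ n ih =>
    exact intervalIntegral.continuous_primitive
      (fun a b => (continuous_clm_apply_of_continuous_apply hW ih).intervalIntegrable a b) t₀

theorem hasDerivAt_dysonTerm_succ (n : ℕ) (s : ℝ) :
    HasDerivAt (dysonTerm W t₀ x (n + 1)) (W s (dysonTerm W t₀ x n s)) s :=
  ((continuous_clm_apply_of_continuous_apply hW
    (continuous_dysonTerm hW n)).integral_hasStrictDerivAt t₀ s).hasDerivAt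

theorem exists_forall_norm_dysonTerm_le (R : ℝ) : ∃ M, 0 ≤ M ∧ ∀ u, |u - t₀| ≤ R →
    ‖W u‖ ≤ M ∧ ∀ n, ‖dysonTerm W t₀ x n u‖ ≤ ‖x‖ * (M * R) ^ n / n.factorial := by
  obtain ⟨M, hM⟩ := (isCompact_closedBall t₀ R).exists_forall_opNorm_le_of_continuous_apply hW
  have hWM : ∀ u, |u - t₀| ≤ R → ‖W u‖ ≤ max M 0 := fun u hu =>
    (hM u (by rwa [Metric.mem_closedBall, Real.dist_eq])).trans (le_max_left _ _)
  refine ⟨max M 0, le_max_right _ _, fun u hu => ⟨hWM u hu, fun n => ?_⟩⟩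
  refine (norm_dysonTerm_le (le_max_right _ _) hWM n hu).trans ?_
  gcongr

theorem summable_dysonTerm (s : ℝ) : Summable fun n => dysonTerm W t₀ x n s := by
  obtain ⟨M, -, hM⟩ := exists_forall_norm_dysonTerm_le (x := x) hW |s - t₀|
  refine .of_norm_bounded ((Real.summable_pow_div_factorial (M * |s - t₀|)).mul_left ‖x‖)
    fun n => ?_
  simpa only [mul_div_assoc] using (hM s le_rfl).2 n

theorem hasDerivAt_tsum_dysonTerm_succ (s : ℝ) :
    HasDerivAt (fun s => ∑' n, dysonTerm W t₀ x (n + 1) s)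
      (∑' n, W s (dysonTerm W t₀ x n s)) s := by
  set R := |s - t₀| + 1
  obtain ⟨M, hM0, hM⟩ := exists_forall_norm_dysonTerm_le (x := x) hW R
  refine hasDerivAt_tsum_of_isPreconnected
    (((Real.summable_pow_div_factorial (M * R)).mul_left ‖x‖).mul_left M)
    Metric.isOpen_ball (convex_ball t₀ R).isPreconnected
    (fun n u _ => hasDerivAt_dysonTerm_succ hW n u) (fun n u hu => ?_)
    (Metric.mem_ball_self (by positivity)) (by simp [dysonTerm])
    (by rw [Metric.mem_ball, Real.dist_eq]; linarith)
  rw [Metric.mem_ball, Real.dist_eq] at hu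
  obtain ⟨hWu, hTu⟩ := hM u hu.le
  calc ‖W u (dysonTerm W t₀ x n u)‖ ≤ M * ‖dysonTerm W t₀ x n u‖ := (W u).le_of_opNorm_le hWu _
    _ ≤ M * (‖x‖ * ((M * R) ^ n / n.factorial)) := by rw [← mul_div_assoc]; gcongr; exact hTu n

variable (t₀ x) in
theorem exists_hasDerivAt_clm_apply_self :
    ∃ y : ℝ → E, y t₀ = x ∧ ∀ s, HasDerivAt y (W s (y s)) s := by
  have hsum := summable_dysonTerm (t₀ := t₀) (x := x) hW
  refine ⟨fun s => ∑' n, dysonTerm W t₀ x n s, ?_, fun s => ?_⟩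
  · simp [(hsum t₀).tsum_eq_zero_add, dysonTerm]
  · convert (hasDerivAt_tsum_dysonTerm_succ hW s).const_add x using 1
    · exact funext fun s => (hsum s).tsum_eq_zero_add
    · exact (W s).map_tsum (hsum s)

end DysonSeries

section Hilbert

variable {H : Type*} [NormedAddCommGroup H] [InnerProductSpace ℂ H] {V : ℝ → H →L[ℂ] H}

theorem norm_eq_of_hasDerivAt_I_smul (hV : ∀ s, (V s : H →ₗ[ℂ] H).IsSymmetric) {y : ℝ → H}
    (hy : ∀ s, HasDerivAt y (Complex.I • V s (y s)) s) (a b : ℝ) : ‖y a‖ = ‖y b‖ := by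
  have hderiv : ∀ s, HasDerivAt (fun s => ⟪y s, y s⟫_ℂ) 0 s := fun s => by
    refine ((hy s).inner ℂ (hy s)).congr_deriv ?_
    rw [inner_smul_left, inner_smul_right, Complex.conj_I, ← ContinuousLinearMap.coe_coe, hV s]
    ring
  have hconst := is_const_of_deriv_eq_zero (fun s => (hderiv s).differentiableAt)
    (fun s => (hderiv s).deriv) a b
  simp only [inner_self_eq_norm_sq_to_K] at hconst
  exact (sq_eq_sq₀ (norm_nonneg _) (norm_nonneg _)).1 (by exact_mod_cast hconst)

theorem eq_of_hasDerivAt_I_smul (hV : ∀ s, (V s : H →ₗ[ℂ] H).IsSymmetric) {y z : ℝ → H}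
    (hy : ∀ s, HasDerivAt y (Complex.I • V s (y s)) s)
    (hz : ∀ s, HasDerivAt z (Complex.I • V s (z s)) s) {a : ℝ} (ha : y a = z a) (b : ℝ) :
    y b = z b := by
  have hyz : ∀ s, HasDerivAt (y - z) (Complex.I • V s ((y - z) s)) s := fun s => by
    simpa only [Pi.sub_apply, map_sub, smul_sub] using (hy s).sub (hz s)
  have hnorm := norm_eq_of_hasDerivAt_I_smul hV hyz a b
  rwa [Pi.sub_apply, ha, sub_self, norm_zero, eq_comm, norm_eq_zero, Pi.sub_apply,
    sub_eq_zero] at hnorm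

theorem exists_linearIsometryEquiv_of_hasDerivAt_I_smul [CompleteSpace H]
    (hV_cont : ∀ x, Continuous fun s => V s x) (hV : ∀ s, (V s : H →ₗ[ℂ] H).IsSymmetric)
    (a b : ℝ) : ∃ U : H ≃ₗᵢ[ℂ] H, ∀ x, ∃ y : ℝ → H,
      (∀ s, HasDerivAt y (Complex.I • V s (y s)) s) ∧ y a = x ∧ y b = U x := by
  have hsol (t : ℝ) (x : H) :
      ∃ y : ℝ → H, y t = x ∧ ∀ s, HasDerivAt y (Complex.I • V s (y s)) s :=
    exists_hasDerivAt_clm_apply_self (W := fun s => Complex.I • V s) t x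
      fun x => (hV_cont x).const_smul Complex.I
  choose Y hYa hY using hsol a
  let U : H →ₗᵢ[ℂ] H :=
    { toFun := fun x => Y x b
      map_add' := fun x x' => by
        refine eq_of_hasDerivAt_I_smul hV (z := Y x + Y x') (hY (x + x')) (fun s => ?_)
          (a := a) ?_ b
        · simpa only [Pi.add_apply, map_add, smul_add] using (hY x s).add (hY x' s)
        · simp [hYa]
      map_smul' := fun c x => by
        refine eq_of_hasDerivAt_I_smul hV (z := c • Y x) (hY (c • x)) (fun s => ?_)
          (a := a) ?_ b
        · simpa only [Pi.smul_apply, map_smul, smul_comm c] using (hY x s).const_smul c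
        · simp [hYa]
      norm_map' := fun x => by
        simp only [LinearMap.coe_mk, AddHom.coe_mk]
        rw [← norm_eq_of_hasDerivAt_I_smul hV (hY x), hYa] }
  have hU : Function.Surjective U := fun z => by
    obtain ⟨w, hwb, hw⟩ := hsol b z
    exact ⟨w a, (eq_of_hasDerivAt_I_smul hV (hY (w a)) hw (hYa (w a)) b).trans hwb⟩
  exact ⟨LinearIsometryEquiv.ofSurjective U hU, fun x => ⟨Y x, hY x, hYa x, rfl⟩⟩

end Hilbert

section HilbertSchmidt

variable {𝕜 E F ι κ : Type*} [RCLike 𝕜] [NormedAddCommGroup E] [InnerProductSpace 𝕜 E]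
  [NormedAddCommGroup F] [InnerProductSpace 𝕜 F]

theorem enorm_sq_eq_ofReal_norm_sq {G : Type*} [SeminormedAddGroup G] (x : G) :
    ‖x‖ₑ ^ 2 = ENNReal.ofReal (‖x‖ ^ 2) := by
  rw [ENNReal.ofReal_pow (norm_nonneg x), ofReal_norm]

theorem summable_and_tsum_eq_of_tsum_enorm_sq_eq {G G' : Type*} [SeminormedAddGroup G]
    [SeminormedAddGroup G'] {f : ι → G} {g : κ → G'}
    (h : ∑' i, ‖f i‖ₑ ^ 2 = ∑' j, ‖g j‖ₑ ^ 2) (hg : Summable fun j => ‖g j‖ ^ 2) :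
    (Summable fun i => ‖f i‖ ^ 2) ∧ ∑' i, ‖f i‖ ^ 2 = ∑' j, ‖g j‖ ^ 2 := by
  simp_rw [enorm_sq_eq_ofReal_norm_sq] at h
  rw [← ENNReal.ofReal_tsum_of_nonneg (fun _ => by positivity) hg] at h
  have hf : Summable fun i => ‖f i‖ ^ 2 := by
    refine (ENNReal.summable_toReal (h ▸ ENNReal.ofReal_ne_top)).congr fun i => ?_
    exact ENNReal.toReal_ofReal (by positivity)
  refine ⟨hf, ?_⟩
  rw [← ENNReal.ofReal_tsum_of_nonneg (fun _ => by positivity) hf] at h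
  exact (ENNReal.ofReal_eq_ofReal_iff (tsum_nonneg fun _ => by positivity)
    (tsum_nonneg fun _ => by positivity)).1 h

protected noncomputable def HilbertBasis.map (b : HilbertBasis ι 𝕜 E) (U : E ≃ₗᵢ[𝕜] F) :
    HilbertBasis ι 𝕜 F :=
  ⟨U.symm.trans b.repr⟩

@[simp]
protected theorem HilbertBasis.map_apply (b : HilbertBasis ι 𝕜 E) (U : E ≃ₗᵢ[𝕜] F) (i : ι) :
    b.map U i = U (b i) :=
  rfl

theorem HilbertBasis.hasSum_sq_norm_inner_right (b : HilbertBasis ι 𝕜 E) (x : E) :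
    HasSum (fun i => ‖⟪b i, x⟫_𝕜‖ ^ 2) (‖x‖ ^ 2) := by
  simpa [b.repr_apply_apply] using lp.hasSum_norm (p := 2) (by norm_num) (b.repr x)

theorem HilbertBasis.tsum_enorm_sq_inner_right (b : HilbertBasis ι 𝕜 E) (x : E) :
    ∑' i, ‖⟪b i, x⟫_𝕜‖ₑ ^ 2 = ‖x‖ₑ ^ 2 := by
  have h := b.hasSum_sq_norm_inner_right x
  simp_rw [enorm_sq_eq_ofReal_norm_sq, ← h.tsum_eq]
  exact (ENNReal.ofReal_tsum_of_nonneg (fun _ => by positivity) h.summable).symm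

variable [CompleteSpace E] [CompleteSpace F]

theorem HilbertBasis.tsum_enorm_sq_apply_eq_adjoint (S : E →L[𝕜] F) (b : HilbertBasis ι 𝕜 E)
    (d : HilbertBasis κ 𝕜 F) : ∑' i, ‖S (b i)‖ₑ ^ 2 = ∑' j, ‖(S†) (d j)‖ₑ ^ 2 := by
  have hswap (i : ι) (j : κ) : ‖⟪d j, S (b i)⟫_𝕜‖ₑ = ‖⟪b i, (S†) (d j)⟫_𝕜‖ₑ := by
    rw [← ContinuousLinearMap.adjoint_inner_left, ← ofReal_norm, ← ofReal_norm, norm_inner_symm]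
  calc ∑' i, ‖S (b i)‖ₑ ^ 2 = ∑' i, ∑' j, ‖⟪d j, S (b i)⟫_𝕜‖ₑ ^ 2 := by
        simp_rw [d.tsum_enorm_sq_inner_right]
    _ = ∑' j, ∑' i, ‖⟪b i, (S†) (d j)⟫_𝕜‖ₑ ^ 2 := by
        rw [ENNReal.tsum_comm]
        simp_rw [hswap]
    _ = ∑' j, ‖(S†) (d j)‖ₑ ^ 2 := by simp_rw [b.tsum_enorm_sq_inner_right]

theorem HilbertBasis.tsum_enorm_sq_apply_eq (S : E →L[𝕜] F) (b : HilbertBasis ι 𝕜 E)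
    (c : HilbertBasis κ 𝕜 E) : ∑' i, ‖S (b i)‖ₑ ^ 2 = ∑' j, ‖S (c j)‖ₑ ^ 2 := by
  obtain ⟨w, d, -⟩ := exists_hilbertBasis 𝕜 F
  rw [b.tsum_enorm_sq_apply_eq_adjoint S d, c.tsum_enorm_sq_apply_eq_adjoint S d]

end HilbertSchmidt

theorem hilbertSchmidt_norm_conserved_general
    {H : Type*} [NormedAddCommGroup H] [InnerProductSpace ℂ H] [CompleteSpace H]
    {ι : Type*} (e : HilbertBasis ι ℂ H)
    (VL VR : ℝ → H →L[ℂ] H)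
    (hVR_strong_cont : ∀ x : H, Continuous fun t => VR t x)
    (hVL_sa : ∀ t : ℝ, IsSelfAdjoint (VL t))
    (hVR_sa : ∀ t : ℝ, IsSelfAdjoint (VR t))
    (C : ℝ → H →L[ℂ] H)
    (hC_ode : ∀ (x : H) (t : ℝ),
      HasDerivAt (fun τ : ℝ => C τ x) (-(Complex.I) • (VL t (C t x) + C t (VR t x))) t)
    (hHS0 : Summable fun k : ι => ‖C 0 (e k)‖ ^ 2) :
    ∀ t : ℝ, (Summable fun k : ι => ‖C t (e k)‖ ^ 2) ∧
      (∑' k : ι, ‖C t (e k)‖ ^ 2) = ∑' k : ι, ‖C 0 (e k)‖ ^ 2 := by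
  intro t
  have hC_cont (x : H) : Continuous fun s => C s x :=
    continuous_iff_continuousAt.2 fun s => (hC_ode x s).continuousAt
  obtain ⟨U, hU⟩ := exists_linearIsometryEquiv_of_hasDerivAt_I_smul hVR_strong_cont
    (fun s => (hVR_sa s).isSymmetric) t 0
  have hnorm (k : ι) : ‖C t (e k)‖ₑ = ‖C 0 (e.map U k)‖ₑ := by
    obtain ⟨y, hy, hyt, hy0⟩ := hU (e k)
    have hφ (s : ℝ) : HasDerivAt (fun s => C s (y s)) (Complex.I • (-VL s) (C s (y s))) s := by
      convert HasDerivAt.clm_apply_of_continuous_apply hC_cont (hC_ode (y s) s) (hy s) using 1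
      simp only [neg_apply, map_smul, smul_add, smul_neg, neg_smul]
      abel
    have hφ_norm := norm_eq_of_hasDerivAt_I_smul (fun s => (hVL_sa s).neg.isSymmetric) hφ t 0
    rw [hyt, hy0] at hφ_norm
    rw [← ofReal_norm, ← ofReal_norm, hφ_norm, HilbertBasis.map_apply]
  exact summable_and_tsum_eq_of_tsum_enorm_sq_eq
    ((tsum_congr fun k => by rw [hnorm k]).trans ((e.map U).tsum_enorm_sq_apply_eq (C 0) e)) hHS0

/-- **Conservation of the Hilbert–Schmidt norm.**
Let `V_L, V_R : ℝ → B(H)` be strongly continuous, locally norm-bounded, selfadjoint families,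
and let `C : ℝ → B(H)` satisfy, for every `x ∈ H`,
`i d/dt (C t x) = V_L t (C t x) + C t (V_R t x)`. If `C 0` is Hilbert–Schmidt (with respect to
an orthonormal basis `(e_k)`, i.e. `Σ_k ‖C 0 e_k‖² < ∞`), then `C t` is Hilbert–Schmidt for
every `t` and its Hilbert–Schmidt norm is conserved: `Σ_k ‖C t e_k‖² = Σ_k ‖C 0 e_k‖²`. -/
theorem hilbertSchmidt_norm_conserved
    {H : Type*} [NormedAddCommGroup H] [InnerProductSpace ℂ H] [CompleteSpace H]
    {ι : Type*} (e : HilbertBasis ι ℂ H)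
    (VL VR : ℝ → H →L[ℂ] H)
    (hVL_strong_cont : ∀ x : H, Continuous fun t => VL t x)
    (hVR_strong_cont : ∀ x : H, Continuous fun t => VR t x)
    (hVL_loc_bdd : ∀ T : ℝ, 0 < T → ∃ M : ℝ, ∀ t : ℝ, |t| ≤ T → ‖VL t‖ ≤ M)
    (hVR_loc_bdd : ∀ T : ℝ, 0 < T → ∃ M : ℝ, ∀ t : ℝ, |t| ≤ T → ‖VR t‖ ≤ M)
    (hVL_sa : ∀ t : ℝ, IsSelfAdjoint (VL t))
    (hVR_sa : ∀ t : ℝ, IsSelfAdjoint (VR t))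
    (C : ℝ → H →L[ℂ] H)
    (hC_ode : ∀ (x : H) (t : ℝ),
      HasDerivAt (fun τ : ℝ => C τ x) (-(Complex.I) • (VL t (C t x) + C t (VR t x))) t)
    (hHS0 : Summable fun k : ι => ‖C 0 (e k)‖ ^ 2) :
    ∀ t : ℝ, (Summable fun k : ι => ‖C t (e k)‖ ^ 2) ∧
      (∑' k : ι, ‖C t (e k)‖ ^ 2) = ∑' k : ι, ‖C 0 (e k)‖ ^ 2 :=
  hilbertSchmidt_norm_conserved_general e VL VR hVR_strong_cont hVL_sa hVR_sa C hC_ode hHS0
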